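/- arXiv:2601.01734 — 2 statements merged into one kernel-verified Lean document; each statement's English description precedes it below -/
import Mathlib

section
/- If G is a complete multipartite graph in which every part has at most 4 vertices, then any subset of V(G) of size at least 7 induces a non-planar subgraph. -/
open SimpleGraph

/-- `H` is a minor of `G`: there are nonempty, connected, pairwise disjoint branch sets. -/
def HasMinor {V W : Type} (G : SimpleGraph V) (H : SimpleGraph W) : Prop :=
  ∃ f : W → Set V,
    (∀ w, (f w).Nonempty) ∧
    (∀ w, (G.induce (f w)).Connected) ∧
    (Pairwise fun w₁ w₂ => Disjoint (f w₁) (f w₂)) ∧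
    (∀ w₁ w₂, H.Adj w₁ w₂ → ∃ v₁ ∈ f w₁, ∃ v₂ ∈ f w₂, G.Adj v₁ v₂)

/-- Planarity via Wagner's theorem: no `K₅` minor and no `K₃,₃` minor. -/
def IsPlanar {V : Type} (G : SimpleGraph V) : Prop :=
  ¬ HasMinor G (completeGraph (Fin 5)) ∧
  ¬ HasMinor G (completeBipartiteGraph (Fin 3) (Fin 3))

/-- The point-thickness: the least `k` such that the vertices can be partitioned into `k`
classes each inducing a planar subgraph. -/
noncomputable def pointThickness {V : Type} (G : SimpleGraph V) : ℕ :=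
  sInf {k | ∃ P : V → Fin k, ∀ i, IsPlanar (G.induce {v | P v = i})}

/-- The complete multipartite graph with part sizes `c i`. -/
def KMulti {ι : Type} (c : ι → ℕ) : SimpleGraph (Σ i, Fin (c i)) :=
  completeMultipartiteGraph fun i => Fin (c i)

/-- `G` contains `H` as a subgraph. -/
def ContainsSub {V W : Type} (G : SimpleGraph V) (H : SimpleGraph W) : Prop :=
  ∃ f : H →g G, Function.Injective f

/-- Part sizes of `K_{1^{k1}, 2^{k2}, 3^{k3}, p 0, …, p (n-1)}`. -/
def sizes (k1 k2 k3 n : ℕ) (p : ℕ → ℕ) : Fin k1 ⊕ Fin k2 ⊕ Fin k3 ⊕ Fin n → ℕ :=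
  Sum.elim (fun _ => 1) (Sum.elim (fun _ => 2) (Sum.elim (fun _ => 3) (fun i => p i.1)))

/-- The complete multipartite graph `K_{1^{k1}, 2^{k2}, 3^{k3}, p 0, …, p (n-1)}`. -/
def Gmulti (k1 k2 k3 n : ℕ) (p : ℕ → ℕ) :=
  KMulti (sizes k1 k2 k3 n p)

/-- The function `N(k₁,k₂)` from the paper (`⌈·⌉`, `⌊·⌋` are ceiling/floor of rationals,
implemented with natural-number division; note `a - 3*b ≥ 0` in the first branch and
`⌊a/3⌋ ≤ b` in the second). -/
def Nfun (a b : ℕ) : ℕ :=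
  if 3 * b ≤ a then b + (a - 3 * b + 3) / 4
  else a / 3 + (b - a / 3) / 3 +
    (if a % 3 = 0 ∧ (b - a / 3) % 3 = 0 then 0
     else if a % 3 = 2 ∧ (b - a / 3) % 3 = 2 then 2 else 1)

open Finset in
/-!
A vertex set of size at least 7 can be split into two sets of size at least 3 such that no part
of `G` meets both: a union of parts of size at least 3 that is minimal for this property has at
most 4 vertices, since removing one part from it leaves fewer than 3 vertices, so that part alone
would already have at least 3. The two sides of the split then span a `K₃,₃`.
-/

open Finset

lemma HasMinor.of_isContained {V W : Type} {G : SimpleGraph V} {H : SimpleGraph W}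
    (h : H ⊑ G) : HasMinor G H := by
  obtain ⟨f⟩ := h
  refine ⟨fun w => {f w}, fun w => Set.singleton_nonempty _, fun w => ?_, fun w₁ w₂ hne => ?_,
    fun w₁ w₂ hadj => ⟨f w₁, rfl, f w₂, rfl, f.toHom.map_adj hadj⟩⟩
  · rw [induce_singleton_eq_top]
    exact connected_top
  · exact Set.disjoint_singleton.mpr (f.injective.ne hne)

lemma completeBipartiteGraph_isContained_of_card_le {V α β : Type*} [Fintype α] [Fintype β]
    {G : SimpleGraph V} {left right : Finset V} (hleft : Fintype.card α ≤ #left)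
    (hright : Fintype.card β ≤ #right) (h : G.IsCompleteBetween left right) :
    completeBipartiteGraph α β ⊑ G := by
  obtain ⟨left', hleft', hcard_left⟩ := exists_subset_card_eq hleft
  obtain ⟨right', hright', hcard_right⟩ := exists_subset_card_eq hright
  exact completeBipartiteGraph_isContained_iff.mpr ⟨left', right', hcard_left, hcard_right,
    fun _ hv₁ _ hv₂ => h (hleft' hv₁) (hright' hv₂)⟩

section FiberSaturated

variable {α ι : Type*} (f : α → ι) (s : Finset α)

def FiberSaturated (A : Finset α) : Prop :=
  ∀ a ∈ A, ∀ b ∈ s, f b = f a → b ∈ A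

variable {f s}

lemma FiberSaturated.filter {A : Finset α} (hA : FiberSaturated f s A) (p : ι → Prop)
    [DecidablePred p] : FiberSaturated f s {a ∈ A | p (f a)} := fun a ha b hb hba => by
  rw [mem_filter] at ha ⊢
  exact ⟨hA a ha.1 b hb hba, hba ▸ ha.2⟩

lemma exists_fiberSaturated_card_mem_Icc [DecidableEq ι] {m k : ℕ}
    (hfiber : ∀ i, #{a ∈ s | f a = i} ≤ k) (hmk : 2 * m ≤ k + 2) (hs : m ≤ #s) :
    ∃ A ⊆ s, FiberSaturated f s A ∧ m ≤ #A ∧ #A ≤ k := by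
  classical
  obtain ⟨A, hA, hmin⟩ := exists_min_image {A ∈ s.powerset | FiberSaturated f s A ∧ m ≤ #A}
    card ⟨s, mem_filter.mpr ⟨mem_powerset_self s, fun _ _ b hb _ => hb, hs⟩⟩
  simp only [mem_filter, mem_powerset] at hA hmin
  obtain ⟨hAs, hsat, hmA⟩ := hA
  refine ⟨A, hAs, hsat, hmA, ?_⟩
  by_contra! hkA
  obtain ⟨a, ha⟩ : A.Nonempty := card_pos.mp (by omega)
  have hsplit : #{b ∈ A | f b = f a} + #{b ∈ A | f b ≠ f a} = #A :=
    card_filter_add_card_filter_not _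
  have hfiber_pos : 0 < #{b ∈ A | f b = f a} := card_pos.mpr ⟨a, mem_filter.mpr ⟨ha, rfl⟩⟩
  have hrest : #{b ∈ A | f b ≠ f a} < m := by
    by_contra! hm
    have := hmin _ ⟨(filter_subset _ _).trans hAs, hsat.filter (· ≠ f a), hm⟩
    omega
  have hfiber_le : #{b ∈ A | f b = f a} ≤ k :=
    (card_le_card (filter_subset_filter _ hAs)).trans (hfiber _)
  have := hmin _ ⟨(filter_subset _ _).trans hAs, hsat.filter (· = f a), by omega⟩
  omega

end FiberSaturated

lemma card_filter_fst_eq_le {ι : Type*} [DecidableEq ι] {V : ι → Type*} [∀ i, Fintype (V i)]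
    (S : Set (Σ i, V i)) [Fintype S] (i : ι) :
    #{x : S | x.1.1 = i} ≤ Fintype.card (V i) := by
  calc #{x : S | x.1.1 = i}
      = #(({x : S | x.1.1 = i} : Finset S).map (Function.Embedding.subtype _)) :=
        (card_map _).symm
    _ ≤ #(univ.map (Function.Embedding.sigmaMk (β := V) i)) := card_le_card fun x hx => by
        obtain ⟨⟨⟨j, v⟩, _⟩, hj, rfl⟩ := mem_map.mp hx
        obtain rfl : j = i := (mem_filter.mp hj).2
        exact mem_map_of_mem _ (mem_univ v)
    _ = Fintype.card (V i) := by simp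

/-- In a complete multipartite graph all of whose parts have at most 4 vertices, every
vertex subset of size at least 7 induces a non-planar subgraph. -/
theorem stmt6 {ι : Type} (V : ι → Type) [∀ i, Fintype (V i)]
    (hp : ∀ i, Fintype.card (V i) ≤ 4)
    (s : Finset (Σ i, V i)) (hs : 7 ≤ s.card) :
    ¬ IsPlanar ((completeMultipartiteGraph V).induce ↑s) := by
  classical
  have hcard : Fintype.card (s : Set (Σ i, V i)) = #s := by simp
  obtain ⟨A, -, hsat, hA3, hA4⟩ := exists_fiberSaturated_card_mem_Icc (s := univ)
    (f := fun x : (s : Set (Σ i, V i)) => x.1.1) (m := 3) (k := 4)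
    (fun i => (card_filter_fst_eq_le _ i).trans (hp i)) le_rfl (by rw [card_univ]; omega)
  have hcomplete : ((completeMultipartiteGraph V).induce ↑s).IsCompleteBetween ↑A ↑(Aᶜ) :=
    fun a ha b hb hab => (mem_compl.mp hb) (hsat a ha b (mem_univ b) hab.symm)
  have hK33 := completeBipartiteGraph_isContained_of_card_le (α := Fin 3) (β := Fin 3)
    (by rwa [Fintype.card_fin]) (by rw [card_compl, Fintype.card_fin, hcard]; omega) hcomplete
  exact fun hplanar => hplanar.2 (HasMinor.of_isContained hK33)
end

section
/- For the complete multipartite graph G = K_{1^{k1}, 2^{k2}, 3^{k3}, p_1, ..., p_n} with 4 ≤ p_1 ≤ ... ≤ p_n and p_0 := k1 + 2k2 + 3k3 ≤ 2n, the point-thickness satisfies θ'(G) = n - max{ j : p_0 + p_1 + ... + p_j ≤ 2(n - j) } (where the maximum is over j with 0 ≤ j ≤ n, interpreting the sum for j = 0 as p_0). -/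
open SimpleGraph

-- connected singleton
lemma conn_singleton {V : Type} (G : SimpleGraph V) (v : V) : (G.induce {v}).Connected := by
  have : Nonempty ({v} : Set V) := ⟨⟨v, rfl⟩⟩
  constructor
  intro x y
  have : x = y := Subtype.ext (by
    have hx := x.2; have hy := y.2
    simp only [Set.mem_singleton_iff] at hx hy; rw [hx, hy])
  rw [this]

-- edgeless connected set is a subsingleton
lemma subsingleton_of_conn_indep {V : Type} (G : SimpleGraph V) (s : Set V)
    (hind : ∀ a ∈ s, ∀ b ∈ s, ¬ G.Adj a b) (hc : (G.induce s).Connected) :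
    ∀ x ∈ s, ∀ y ∈ s, x = y := by
  intro x hx y hy
  obtain ⟨w⟩ := hc.preconnected ⟨x, hx⟩ ⟨y, hy⟩
  cases w with
  | nil => rfl
  | cons h _ =>
      exact absurd h (by
        rename_i b _
        exact fun hadj => hind x hx b.1 b.2 hadj)

-- K33 pattern gives non-planarity
lemma not_isPlanar_of_K33 {V : Type} (G : SimpleGraph V) (l r : Fin 3 → V)
    (hl : Function.Injective l) (hr : Function.Injective r)
    (h : ∀ i j, G.Adj (l i) (r j)) : ¬ IsPlanar G := by
  intro hP
  apply hP.2
  set g : Fin 3 ⊕ Fin 3 → V := Sum.elim l r with hg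
  have hginj : Function.Injective g := by
    intro a b hab
    rcases a with i | i <;> rcases b with j | j <;> simp only [hg, Sum.elim_inl, Sum.elim_inr] at hab
    · rw [hl hab]
    · exact absurd hab (h i j).ne
    · exact absurd hab.symm (h j i).ne
    · rw [hr hab]
  refine ⟨fun w => {g w}, fun w => ⟨g w, rfl⟩, fun w => conn_singleton G (g w), ?_, ?_⟩
  · intro a b hab
    simp only [Set.disjoint_singleton]
    exact fun he => hab (hginj he)
  · rintro (i | i) (j | j) hadj <;>
      simp only [completeBipartiteGraph_adj, Sum.isLeft_inl, Sum.isRight_inl, Sum.isLeft_inr,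
        Sum.isRight_inr] at hadj
    · simp at hadj
    · exact ⟨l i, rfl, r j, rfl, h i j⟩
    · exact ⟨r i, rfl, l j, rfl, (h j i).symm⟩
    · simp at hadj

lemma planar_of_almost_independent {V : Type} (G : SimpleGraph V) (A : Set V)
    (hind : ∀ a ∈ A, ∀ b ∈ A, ¬ G.Adj a b)
    (h2 : ∀ u v w : V, u ∉ A → v ∉ A → w ∉ A → u = v ∨ u = w ∨ v = w) :
    IsPlanar G := by
  classical
  constructor
  all_goals rintro ⟨f, hne, hconn, hdisj, hadj⟩
  -- K5 case
  · -- T: branch sets inside A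
    set T : Finset (Fin 5) := Finset.univ.filter (fun w => ∀ v ∈ f w, v ∈ A) with hT
    have hTc : (Finset.univ.filter (fun w => ¬ ∀ v ∈ f w, v ∈ A)).card ≤ 2 := by
      by_contra hgt
      push_neg at hgt
      obtain ⟨w₁, w₂, w₃, hw₁, hw₂, hw₃, h12, h13, h23⟩ := Finset.two_lt_card_iff.mp hgt
      rw [Finset.mem_filter] at hw₁ hw₂ hw₃
      obtain ⟨v₁, hv₁, hv₁A⟩ := hw₁.2
      obtain ⟨v₂, hv₂, hv₂A⟩ := hw₂.2
      obtain ⟨v₃, hv₃, hv₃A⟩ := hw₃.2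
      have d12 : v₁ ≠ v₂ := fun he => (hdisj h12).ne_of_mem hv₁ hv₂ he
      have d13 : v₁ ≠ v₃ := fun he => (hdisj h13).ne_of_mem hv₁ hv₃ he
      have d23 : v₂ ≠ v₃ := fun he => (hdisj h23).ne_of_mem hv₂ hv₃ he
      rcases h2 v₁ v₂ v₃ hv₁A hv₂A hv₃A with h | h | h
      exacts [d12 h, d13 h, d23 h]
    have hTcard : 3 ≤ T.card := by
      have := Finset.card_filter_add_card_filter_not
        (s := (Finset.univ : Finset (Fin 5))) (p := fun w => ∀ v ∈ f w, v ∈ A)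
      simp only [Finset.card_univ, Fintype.card_fin] at this
      rw [← hT] at this
      omega
    obtain ⟨w₁, hw₁, w₂, hw₂, hne12⟩ := (Finset.one_lt_card (s := T)).mp (by omega)
    obtain ⟨v₁, hv₁, v₂, hv₂, hGadj⟩ := hadj w₁ w₂ hne12
    rw [hT, Finset.mem_filter] at hw₁ hw₂
    exact hind v₁ (hw₁.2 v₁ hv₁) v₂ (hw₂.2 v₂ hv₂) hGadj
  -- K33 case
  · set T : Finset (Fin 3 ⊕ Fin 3) := Finset.univ.filter (fun w => ∀ v ∈ f w, v ∈ A) with hT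
    have hTc : (Finset.univ.filter (fun w : Fin 3 ⊕ Fin 3 => ¬ ∀ v ∈ f w, v ∈ A)).card ≤ 2 := by
      by_contra hgt
      push_neg at hgt
      obtain ⟨w₁, w₂, w₃, hw₁, hw₂, hw₃, h12, h13, h23⟩ := Finset.two_lt_card_iff.mp hgt
      rw [Finset.mem_filter] at hw₁ hw₂ hw₃
      obtain ⟨v₁, hv₁, hv₁A⟩ := hw₁.2
      obtain ⟨v₂, hv₂, hv₂A⟩ := hw₂.2
      obtain ⟨v₃, hv₃, hv₃A⟩ := hw₃.2
      have d12 : v₁ ≠ v₂ := fun he => (hdisj h12).ne_of_mem hv₁ hv₂ he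
      have d13 : v₁ ≠ v₃ := fun he => (hdisj h13).ne_of_mem hv₁ hv₃ he
      have d23 : v₂ ≠ v₃ := fun he => (hdisj h23).ne_of_mem hv₂ hv₃ he
      rcases h2 v₁ v₂ v₃ hv₁A hv₂A hv₃A with h | h | h
      exacts [d12 h, d13 h, d23 h]
    have hTcard : 4 ≤ T.card := by
      have := Finset.card_filter_add_card_filter_not
        (s := (Finset.univ : Finset (Fin 3 ⊕ Fin 3))) (p := fun w => ∀ v ∈ f w, v ∈ A)
      simp only [Finset.card_univ, Fintype.card_sum, Fintype.card_fin] at this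
      rw [← hT] at this
      omega
    -- find a left and a right element of T
    have hsplit := Finset.card_filter_add_card_filter_not
      (s := T) (p := fun w => w.isLeft = true)
    have hleft : (T.filter (fun w => w.isLeft = true)).card ≤ 3 := by
      calc (T.filter (fun w => w.isLeft = true)).card
          ≤ ((Finset.univ : Finset (Fin 3)).image Sum.inl).card := by
            apply Finset.card_le_card
            intro w hw
            simp only [Finset.mem_filter] at hw
            rcases w with i | i
            · simp
            · simp at hw
        _ ≤ 3 := le_trans Finset.card_image_le (by simp)
    have hright : (T.filter (fun w => ¬ w.isLeft = true)).card ≤ 3 := by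
      calc (T.filter (fun w => ¬ w.isLeft = true)).card
          ≤ ((Finset.univ : Finset (Fin 3)).image Sum.inr).card := by
            apply Finset.card_le_card
            intro w hw
            simp only [Finset.mem_filter] at hw
            rcases w with i | i
            · simp at hw
            · simp
        _ ≤ 3 := le_trans Finset.card_image_le (by simp)
    have hL : 0 < (T.filter (fun w => w.isLeft = true)).card := by omega
    have hR : 0 < (T.filter (fun w => ¬ w.isLeft = true)).card := by omega
    obtain ⟨wl, hwl⟩ := Finset.card_pos.mp hL
    obtain ⟨wr, hwr⟩ := Finset.card_pos.mp hR
    simp only [Finset.mem_filter, hT] at hwl hwr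
    rcases wl with i | i; swap; · simp at hwl
    rcases wr with j | j; · simp at hwr
    obtain ⟨v₁, hv₁, v₂, hv₂, hGadj⟩ := hadj (Sum.inl i) (Sum.inr j) (by simp)
    exact hind v₁ (hwl.1.2 v₁ hv₁) v₂ (hwr.1.2 v₂ hv₂) hGadj

lemma card_fiber {ι : Type} [DecidableEq ι] [Fintype ι] (c : ι → ℕ) (i : ι) :
    (Finset.univ.filter fun v : (Σ j, Fin (c j)) => v.1 = i).card = c i := by
  rw [← Fintype.card_subtype]
  have e : {v : (Σ j, Fin (c j)) // v.1 = i} ≃ Fin (c i) := by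
    refine ⟨fun x => (x.2 ▸ x.1.2 : Fin (c i)), fun v => ⟨⟨i, v⟩, rfl⟩, ?_, ?_⟩
    · rintro ⟨⟨j, v⟩, h⟩
      subst h; rfl
    · intro v; rfl
  rw [Fintype.card_congr e, Fintype.card_fin]

lemma card_base_filter {ι : Type} [DecidableEq ι] [Fintype ι] (c : ι → ℕ) (Q : ι → Prop)
    [DecidablePred Q] :
    (Finset.univ.filter fun v : (Σ j, Fin (c j)) => Q v.1).card
      = ∑ i ∈ Finset.univ.filter Q, c i := by
  rw [Finset.card_eq_sum_card_fiberwise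
    (f := Sigma.fst) (t := Finset.univ.filter Q)
    (fun x hx => by simp only [Finset.mem_coe, Finset.mem_filter] at hx ⊢; exact ⟨Finset.mem_univ _, hx.2⟩)]
  apply Finset.sum_congr rfl
  intro i hi
  simp only [Finset.mem_filter] at hi
  rw [← card_fiber c i]
  congr 1
  ext v
  simp only [Finset.mem_filter, Finset.mem_univ, true_and]
  exact ⟨fun h => h.2, fun h => ⟨h ▸ hi.2, h⟩⟩

lemma prefix_sum_34 {ι : Type} [DecidableEq ι] :
    ∀ (t : Finset ι) (w : ι → ℕ), (∀ i ∈ t, w i ≤ 2) → 3 ≤ ∑ i ∈ t, w i →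
    ∃ s ⊆ t, 3 ≤ ∑ i ∈ s, w i ∧ ∑ i ∈ s, w i ≤ 4 := by
  intro t
  induction t using Finset.strongInduction with
  | _ t ih =>
    intro w hw h3
    by_cases h4 : ∑ i ∈ t, w i ≤ 4
    · exact ⟨t, Finset.Subset.refl t, h3, h4⟩
    · have hne : t.Nonempty := by
        rw [← Finset.card_pos]
        by_contra h
        push_neg at h
        interval_cases ht : t.card
        · rw [Finset.card_eq_zero.mp ht] at h3; simp at h3
      obtain ⟨q, hq⟩ := hne
      have herase : ∑ i ∈ t.erase q, w i = ∑ i ∈ t, w i - w q := by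
        rw [← Finset.sum_erase_add t w hq]; omega
      have h3' : 3 ≤ ∑ i ∈ t.erase q, w i := by
        have := hw q hq; omega
      obtain ⟨s, hs, h⟩ := ih (t.erase q) (Finset.erase_ssubset hq) w
        (fun i hi => hw i (Finset.mem_of_mem_erase hi)) h3'
      exact ⟨s, hs.trans (Finset.erase_subset q t), h⟩

lemma sum_smallest_le {n : ℕ} (p : ℕ → ℕ)
    (hp4 : ∀ i, i < n → 4 ≤ p i) (hmono : ∀ i j, i ≤ j → j < n → p i ≤ p j) :
    ∀ (U : Finset ℕ), (∀ i ∈ U, i < n) → ∀ m, m ≤ U.card →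
    ∑ i ∈ Finset.range m, p i + 4 * (U.card - m) ≤ ∑ i ∈ U, p i := by
  intro U
  induction U using Finset.strongInduction with
  | _ U ih =>
    intro hUn m hm
    rcases Nat.eq_zero_or_pos U.card with h0 | hpos
    · have : m = 0 := by omega
      subst this
      simp [Finset.card_eq_zero.mp h0]
    · obtain ⟨x, hx, hmax⟩ : ∃ x ∈ U, ∀ y ∈ U, y ≤ x := by
        have hne : U.Nonempty := Finset.card_pos.mp hpos
        exact ⟨U.max' hne, U.max'_mem hne, fun y hy => U.le_max' y hy⟩
      have hxn : x < n := hUn x hx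
      have hcard_le : U.card ≤ x + 1 := by
        have : U ⊆ Finset.range (x + 1) := fun y hy => Finset.mem_range.mpr (by
          have := hmax y hy; omega)
        calc U.card ≤ (Finset.range (x+1)).card := Finset.card_le_card this
          _ = x + 1 := Finset.card_range _
      have hUsum : ∑ i ∈ U, p i = ∑ i ∈ U.erase x, p i + p x := by
        rw [Finset.sum_erase_add U p hx]
      have hcarde : (U.erase x).card = U.card - 1 := Finset.card_erase_of_mem hx
      have hssub : U.erase x ⊂ U := Finset.erase_ssubset hx
      have hUe : ∀ i ∈ U.erase x, i < n := fun i hi => hUn i (Finset.mem_of_mem_erase hi)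
      rcases Nat.lt_or_ge m U.card with hlt | hge
      · -- m < U.card : recurse with m
        have := ih (U.erase x) hssub hUe m (by omega)
        have hpx : 4 ≤ p x := hp4 x hxn
        omega
      · -- m = U.card
        have hmeq : m = U.card := le_antisymm hm hge
        have hm1 : 1 ≤ m := by omega
        have hrange : ∑ i ∈ Finset.range m, p i = ∑ i ∈ Finset.range (m-1), p i + p (m-1) := by
          have : m = (m-1) + 1 := by omega
          rw [this, Finset.sum_range_succ]
          congr 1
        have hple : p (m-1) ≤ p x := hmono (m-1) x (by omega) hxn
        have := ih (U.erase x) hssub hUe (m-1) (by omega)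
        omega

lemma inj3 {α : Type} (a b c : α) (hab : a ≠ b) (hac : a ≠ c) (hbc : b ≠ c) :
    Function.Injective ![a, b, c] := by
  intro x y h
  fin_cases x <;> fin_cases y <;> simp_all

lemma not_planar_triples {ι : Type} (c : ι → ℕ) (s : Set (Σ i, Fin (c i)))
    (la lb : Fin 3 → (Σ i, Fin (c i)))
    (hmem : ∀ x, la x ∈ s ∧ lb x ∈ s)
    (hainj : Function.Injective la) (hbinj : Function.Injective lb)
    (hcross : ∀ x y, (la x).1 ≠ (lb y).1) :
    ¬ IsPlanar ((KMulti c).induce s) := by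
  apply not_isPlanar_of_K33 _ (fun x => (⟨la x, (hmem x).1⟩ : s)) (fun x => ⟨lb x, (hmem x).2⟩)
  · intro x y h
    exact hainj (Subtype.ext_iff.mp h)
  · intro x y h
    exact hbinj (Subtype.ext_iff.mp h)
  · intro x y
    exact hcross x y

section ClassLemmas
variable {ι : Type} [DecidableEq ι] [Fintype ι] (c : ι → ℕ) {k : ℕ} (P : (Σ i, Fin (c i)) → Fin k)

lemma class_bound_M (cc : Fin k) (i : ι)
    (hpl : IsPlanar ((KMulti c).induce {v | P v = cc}))
    (h3 : 3 ≤ (Finset.univ.filter fun v => P v = cc ∧ v.1 = i).card) :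
    (Finset.univ.filter fun v => P v = cc ∧ v.1 ≠ i).card ≤ 2 := by
  classical
  by_contra hgt
  push_neg at hgt
  obtain ⟨a₁, a₂, a₃, ha₁, ha₂, ha₃, ha12, ha13, ha23⟩ :=
    Finset.two_lt_card_iff.mp (lt_of_lt_of_le (by norm_num) h3)
  obtain ⟨b₁, b₂, b₃, hb₁, hb₂, hb₃, hb12, hb13, hb23⟩ := Finset.two_lt_card_iff.mp hgt
  rw [Finset.mem_filter] at ha₁ ha₂ ha₃ hb₁ hb₂ hb₃
  refine not_planar_triples c _ ![a₁, a₂, a₃] ![b₁, b₂, b₃] ?_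
    (inj3 _ _ _ ha12 ha13 ha23) (inj3 _ _ _ hb12 hb13 hb23) ?_ hpl
  · intro x
    fin_cases x <;>
      exact ⟨by simpa using (by first | exact ha₁.2.1 | exact ha₂.2.1 | exact ha₃.2.1),
             by simpa using (by first | exact hb₁.2.1 | exact hb₂.2.1 | exact hb₃.2.1)⟩
  · intro x y
    fin_cases x <;> fin_cases y <;>
      simp only [Matrix.cons_val_zero, Matrix.cons_val_one, Matrix.head_cons,
        Matrix.cons_val_two, Matrix.tail_cons] <;>
      first
        | (exact fun h => hb₁.2.2 (h ▸ (by first | exact ha₁.2.2 | exact ha₂.2.2 | exact ha₃.2.2)))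
        | (exact fun h => hb₂.2.2 (h ▸ (by first | exact ha₁.2.2 | exact ha₂.2.2 | exact ha₃.2.2)))
        | (exact fun h => hb₃.2.2 (h ▸ (by first | exact ha₁.2.2 | exact ha₂.2.2 | exact ha₃.2.2)))

lemma class_unique_M (cc : Fin k) (i i' : ι) (hii : i ≠ i')
    (hpl : IsPlanar ((KMulti c).induce {v | P v = cc}))
    (h3 : 3 ≤ (Finset.univ.filter fun v => P v = cc ∧ v.1 = i).card)
    (h3' : 3 ≤ (Finset.univ.filter fun v => P v = cc ∧ v.1 = i').card) : False := by
  classical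
  obtain ⟨a₁, a₂, a₃, ha₁, ha₂, ha₃, ha12, ha13, ha23⟩ :=
    Finset.two_lt_card_iff.mp (lt_of_lt_of_le (by norm_num) h3)
  obtain ⟨b₁, b₂, b₃, hb₁, hb₂, hb₃, hb12, hb13, hb23⟩ :=
    Finset.two_lt_card_iff.mp (lt_of_lt_of_le (by norm_num) h3')
  rw [Finset.mem_filter] at ha₁ ha₂ ha₃ hb₁ hb₂ hb₃
  refine not_planar_triples c _ ![a₁, a₂, a₃] ![b₁, b₂, b₃] ?_
    (inj3 _ _ _ ha12 ha13 ha23) (inj3 _ _ _ hb12 hb13 hb23) ?_ hpl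
  · intro x
    fin_cases x <;>
      exact ⟨by simpa using (by first | exact ha₁.2.1 | exact ha₂.2.1 | exact ha₃.2.1),
             by simpa using (by first | exact hb₁.2.1 | exact hb₂.2.1 | exact hb₃.2.1)⟩
  · intro x y
    have key : ∀ u v : (Σ j, Fin (c j)), u.1 = i → v.1 = i' → u.1 ≠ v.1 := by
      intro u v hu hv
      rw [hu, hv]; exact hii
    fin_cases x <;> fin_cases y <;>
      simp only [Matrix.cons_val_zero, Matrix.cons_val_one, Matrix.head_cons,
        Matrix.cons_val_two, Matrix.tail_cons] <;>
      apply key <;>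
      first | exact ha₁.2.2 | exact ha₂.2.2 | exact ha₃.2.2
            | exact hb₁.2.2 | exact hb₂.2.2 | exact hb₃.2.2

lemma class_bound_six (cc : Fin k)
    (hpl : IsPlanar ((KMulti c).induce {v | P v = cc}))
    (hall : ∀ i : ι, (Finset.univ.filter fun v => P v = cc ∧ v.1 = i).card ≤ 2) :
    (Finset.univ.filter fun v => P v = cc).card ≤ 6 := by
  classical
  by_contra hgt
  push_neg at hgt
  set cls : Finset (Σ j, Fin (c j)) := Finset.univ.filter (fun v => P v = cc) with hcls
  set t : Finset ι := cls.image Sigma.fst with ht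
  have hfib : ∀ j : ι, (cls.filter fun v => v.1 = j)
      = Finset.univ.filter fun v => P v = cc ∧ v.1 = j := by
    intro j
    ext v
    simp only [hcls, Finset.mem_filter, Finset.mem_univ, true_and, and_assoc]
  have hsum : ∑ j ∈ t, (cls.filter fun v => v.1 = j).card = cls.card := by
    rw [← Finset.card_eq_sum_card_fiberwise]
    intro v hv
    exact Finset.mem_image_of_mem Sigma.fst hv
  obtain ⟨s, hst, hs3, hs4⟩ := prefix_sum_34 t (fun j => (cls.filter fun v => v.1 = j).card)
    (fun j _ => by
      show (cls.filter fun v => v.1 = j).card ≤ 2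
      rw [hfib]; exact hall j)
    (by show 3 ≤ ∑ j ∈ t, (cls.filter fun v => v.1 = j).card; omega)
  have hs3' : 3 ≤ ∑ j ∈ s, (cls.filter fun v => v.1 = j).card := hs3
  have hs4' : ∑ j ∈ s, (cls.filter fun v => v.1 = j).card ≤ 4 := hs4
  -- left side: vertices of cls whose part is in s
  have hLcard : ∑ j ∈ s, (cls.filter fun v => v.1 = j).card
      = (cls.filter fun v => v.1 ∈ s).card := by
    rw [Finset.card_eq_sum_card_fiberwise (f := Sigma.fst) (t := s)]
    · apply Finset.sum_congr rfl
      intro j hj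
      congr 1
      ext v
      simp only [Finset.mem_filter, and_assoc]
      constructor
      · rintro ⟨h1, h2⟩; exact ⟨h1, (h2 ▸ hj : v.1 ∈ s), h2⟩
      · rintro ⟨h1, _, h3⟩; exact ⟨h1, h3⟩
    · intro v hv
      exact (Finset.mem_filter.mp hv).2
  have hsplit := Finset.card_filter_add_card_filter_not
    (s := cls) (p := fun v => v.1 ∈ s)
  have hRcard : 3 ≤ (cls.filter fun v => ¬ v.1 ∈ s).card := by omega
  have hL3 : 3 ≤ (cls.filter fun v => v.1 ∈ s).card := by omega
  obtain ⟨a₁, a₂, a₃, ha₁, ha₂, ha₃, ha12, ha13, ha23⟩ :=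
    Finset.two_lt_card_iff.mp (lt_of_lt_of_le (by norm_num) hL3)
  obtain ⟨b₁, b₂, b₃, hb₁, hb₂, hb₃, hb12, hb13, hb23⟩ :=
    Finset.two_lt_card_iff.mp (lt_of_lt_of_le (by norm_num) hRcard)
  rw [Finset.mem_filter] at ha₁ ha₂ ha₃ hb₁ hb₂ hb₃
  have hamem : ∀ x, x ∈ cls → P x = cc := by
    intro x hx
    exact (Finset.mem_filter.mp hx).2
  refine not_planar_triples c _ ![a₁, a₂, a₃] ![b₁, b₂, b₃] ?_
    (inj3 _ _ _ ha12 ha13 ha23) (inj3 _ _ _ hb12 hb13 hb23) ?_ hpl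
  · intro x
    fin_cases x <;>
      exact ⟨by simpa using (by first | exact hamem _ ha₁.1 | exact hamem _ ha₂.1 | exact hamem _ ha₃.1),
             by simpa using (by first | exact hamem _ hb₁.1 | exact hamem _ hb₂.1 | exact hamem _ hb₃.1)⟩
  · intro x y
    have key : ∀ u v : (Σ j, Fin (c j)), u.1 ∈ s → ¬ v.1 ∈ s → u.1 ≠ v.1 := by
      intro u v hu hv he
      exact hv (he ▸ hu)
    fin_cases x <;> fin_cases y <;>
      simp only [Matrix.cons_val_zero, Matrix.cons_val_one, Matrix.head_cons,
        Matrix.cons_val_two, Matrix.tail_cons] <;>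
      apply key <;>
      first | exact ha₁.2 | exact ha₂.2 | exact ha₃.2
            | exact hb₁.2 | exact hb₂.2 | exact hb₃.2
end ClassLemmas


section Lower
variable (k1 k2 k3 n : ℕ) (p : ℕ → ℕ)

/-- big part indices -/
def bigI : Fin n → Fin k1 ⊕ Fin k2 ⊕ Fin k3 ⊕ Fin n := fun i => Sum.inr (Sum.inr (Sum.inr i))

lemma bigI_inj : Function.Injective (bigI k1 k2 k3 n) := by
  intro a b h
  simpa [bigI] using h

lemma lower_bound (hp4 : ∀ i, i < n → 4 ≤ p i)
    (hmono : ∀ i j, i ≤ j → j < n → p i ≤ p j)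
    (hp0 : k1 + 2 * k2 + 3 * k3 ≤ 2 * n)
    (k : ℕ) (hkn : k ≤ n) (P : (Σ i, Fin (sizes k1 k2 k3 n p i)) → Fin k)
    (hpl : ∀ cc, IsPlanar ((Gmulti k1 k2 k3 n p).induce {v | P v = cc})) :
    k1 + 2 * k2 + 3 * k3 + ∑ i ∈ Finset.range (n - k), p i ≤ 2 * k := by
  classical
  rcases Nat.eq_zero_or_pos n with hn | hn
  · subst hn
    simp only [Nat.zero_sub, Finset.range_zero, Finset.sum_empty, Nat.add_zero]
    omega
  rcases Nat.eq_zero_or_pos k with hk | hk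
  · subst hk
    have v0 : (Σ i, Fin (sizes k1 k2 k3 n p i)) :=
      ⟨bigI k1 k2 k3 n ⟨0, hn⟩, ⟨0, lt_of_lt_of_le (by norm_num) (hp4 0 hn)⟩⟩
    exact (P v0).elim0
  set ch : Fin k → (Fin k1 ⊕ Fin k2 ⊕ Fin k3 ⊕ Fin n) → ℕ :=
    fun cc j => (Finset.univ.filter
      fun v : (Σ i, Fin (sizes k1 k2 k3 n p i)) => P v = cc ∧ v.1 = j).card with hch
  -- housed big parts
  set Hset : Finset (Fin n) :=
    Finset.univ.filter (fun i => ∃ cc, 3 ≤ ch cc (bigI k1 k2 k3 n i)) with hH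
  set KB : Finset (Fin k) :=
    Finset.univ.filter (fun cc => ∃ i : Fin n, 3 ≤ ch cc (bigI k1 k2 k3 n i)) with hKB
  -- |Hset| ≤ |KB|
  have hHK : Hset.card ≤ KB.card := by
    apply Finset.card_le_card_of_injOn
      (fun i => if h : ∃ cc, 3 ≤ ch cc (bigI k1 k2 k3 n i) then h.choose else ⟨0, hk⟩)
    · intro i hi
      rw [hH, Finset.mem_coe, Finset.mem_filter] at hi
      beta_reduce
      rw [dif_pos hi.2, hKB, Finset.mem_coe, Finset.mem_filter]
      exact ⟨Finset.mem_univ _, ⟨i, hi.2.choose_spec⟩⟩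
    · intro i hi i' hi' he
      by_contra hne
      rw [Finset.mem_coe, hH, Finset.mem_filter] at hi hi'
      beta_reduce at he
      rw [dif_pos hi.2, dif_pos hi'.2] at he
      refine class_unique_M (sizes k1 k2 k3 n p) P (hi.2.choose)
        (bigI k1 k2 k3 n i) (bigI k1 k2 k3 n i')
        (fun hc => hne (bigI_inj k1 k2 k3 n hc)) (hpl _) hi.2.choose_spec ?_
      rw [he]
      exact hi'.2.choose_spec
  set U : Finset (Fin n) := Finset.univ \ Hset with hUdef
  have hUcard : U.card = n - Hset.card := by
    rw [hUdef, Finset.card_sdiff_of_subset (Finset.subset_univ _), Finset.card_univ, Fintype.card_fin]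
  have hKBk : KB.card ≤ k := by
    calc KB.card ≤ (Finset.univ : Finset (Fin k)).card := Finset.card_le_card (Finset.subset_univ _)
      _ = k := by rw [Finset.card_univ, Fintype.card_fin]
  -- the predicate for counted vertices
  set Q : (Fin k1 ⊕ Fin k2 ⊕ Fin k3 ⊕ Fin n) → Prop :=
    fun j => ∀ i : Fin n, j = bigI k1 k2 k3 n i → i ∈ U with hQ
  set S : Finset (Σ i, Fin (sizes k1 k2 k3 n p i)) :=
    Finset.univ.filter (fun v => Q v.1) with hS
  -- card of S
  have hScard : S.card = k1 + 2 * k2 + 3 * k3 + ∑ i ∈ U, p i.1 := by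
    have hcbf := card_base_filter (sizes k1 k2 k3 n p) Q
    rw [hS, hcbf, Finset.sum_filter]
    rw [Fintype.sum_sum_type, Fintype.sum_sum_type, Fintype.sum_sum_type]
    have e1 : ∀ a : Fin k1, (if Q (Sum.inl a) then sizes k1 k2 k3 n p (Sum.inl a) else 0) = 1 := by
      intro a
      rw [if_pos]
      · rfl
      · intro i hi; exact absurd hi (by simp [bigI])
    have e2 : ∀ a : Fin k2, (if Q (Sum.inr (Sum.inl a)) then
        sizes k1 k2 k3 n p (Sum.inr (Sum.inl a)) else 0) = 2 := by
      intro a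
      rw [if_pos]
      · rfl
      · intro i hi; exact absurd hi (by simp [bigI])
    have e3 : ∀ a : Fin k3, (if Q (Sum.inr (Sum.inr (Sum.inl a))) then
        sizes k1 k2 k3 n p (Sum.inr (Sum.inr (Sum.inl a))) else 0) = 3 := by
      intro a
      rw [if_pos]
      · rfl
      · intro i hi; exact absurd hi (by simp [bigI])
    have e4 : ∀ i : Fin n, (if Q (Sum.inr (Sum.inr (Sum.inr i))) then
        sizes k1 k2 k3 n p (Sum.inr (Sum.inr (Sum.inr i))) else 0) = if i ∈ U then p i.1 else 0 := by
      intro i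
      by_cases hiU : i ∈ U
      · rw [if_pos, if_pos hiU]
        · rfl
        · intro i' hi'
          have : i' = i := bigI_inj k1 k2 k3 n hi'.symm
          rw [this]; exact hiU
      · rw [if_neg, if_neg hiU]
        intro hQi
        exact hiU (hQi i rfl)
    rw [Finset.sum_congr rfl (fun a _ => e1 a), Finset.sum_congr rfl (fun a _ => e2 a),
      Finset.sum_congr rfl (fun a _ => e3 a), Finset.sum_congr rfl (fun i _ => e4 i)]
    rw [Finset.sum_const, Finset.sum_const, Finset.sum_const, Finset.card_univ, Finset.card_univ,
      Finset.card_univ, Fintype.card_fin, Fintype.card_fin, Fintype.card_fin,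
      ← Finset.sum_filter]
    have : Finset.univ.filter (fun i : Fin n => i ∈ U) = U := by
      ext i; simp
    rw [this]
    simp [Nat.smul_one_eq_cast]
    ring
  -- fiberwise decomposition of S by classes
  have hfiber : S.card = ∑ cc ∈ (Finset.univ : Finset (Fin k)), (S.filter fun v => P v = cc).card :=
    Finset.card_eq_sum_card_fiberwise (fun v _ => Finset.mem_univ (P v))
  -- per-class bounds
  have hclassKB : ∀ cc ∈ KB, (S.filter fun v => P v = cc).card ≤ 2 := by
    intro cc hcc
    rw [hKB, Finset.mem_filter] at hcc
    obtain ⟨i₀, hi₀⟩ := hcc.2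
    have hi₀H : i₀ ∈ Hset := by
      rw [hH, Finset.mem_filter]
      exact ⟨Finset.mem_univ _, ⟨cc, hi₀⟩⟩
    have hsub : S.filter (fun v => P v = cc) ⊆
        Finset.univ.filter (fun v => P v = cc ∧ v.1 ≠ bigI k1 k2 k3 n i₀) := by
      intro v hv
      rw [Finset.mem_filter] at hv
      rw [Finset.mem_filter]
      refine ⟨Finset.mem_univ _, hv.2, ?_⟩
      intro hv1
      have hQv : Q v.1 := (Finset.mem_filter.mp hv.1).2
      have : i₀ ∈ U := hQv i₀ hv1
      rw [hUdef, Finset.mem_sdiff] at this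
      exact this.2 hi₀H
    calc (S.filter fun v => P v = cc).card
        ≤ (Finset.univ.filter fun v => P v = cc ∧ v.1 ≠ bigI k1 k2 k3 n i₀).card :=
          Finset.card_le_card hsub
      _ ≤ 2 := class_bound_M (sizes k1 k2 k3 n p) P cc (bigI k1 k2 k3 n i₀) (hpl cc) hi₀
  have hclassNKB : ∀ cc ∈ Finset.univ \ KB, (S.filter fun v => P v = cc).card ≤ 6 := by
    intro cc hcc
    rw [Finset.mem_sdiff, hKB, Finset.mem_filter] at hcc
    have hnotKB : ∀ i : Fin n, ch cc (bigI k1 k2 k3 n i) ≤ 2 := by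
      intro i
      by_contra hgt
      exact hcc.2 ⟨Finset.mem_univ _, ⟨i, by omega⟩⟩
    have hsub : S.filter (fun v => P v = cc) ⊆ Finset.univ.filter (fun v => P v = cc) := by
      intro v hv
      rw [Finset.mem_filter] at hv
      rw [Finset.mem_filter]
      exact ⟨Finset.mem_univ _, hv.2⟩
    refine le_trans (Finset.card_le_card hsub) ?_
    by_cases hex : ∃ j, 3 ≤ ch cc j
    · obtain ⟨j, hj⟩ := hex
      -- j must be a small part, of size ≤ 3
      have hsz : sizes k1 k2 k3 n p j ≤ 3 := by
        rcases j with a | b | c | i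
        · exact le_trans (le_refl 1) (by norm_num)
        · exact le_trans (le_refl 2) (by norm_num)
        · exact le_refl 3
        · exact absurd hj (by
            have := hnotKB i
            simp only [bigI] at this ⊢
            omega)
      have hchle : ch cc j ≤ 3 := by
        rw [hch]
        calc (Finset.univ.filter fun v => P v = cc ∧ v.1 = j).card
            ≤ (Finset.univ.filter fun v :
                (Σ i, Fin (sizes k1 k2 k3 n p i)) => v.1 = j).card := by
              apply Finset.card_le_card
              intro v hv
              rw [Finset.mem_filter] at hv ⊢
              exact ⟨hv.1, hv.2.2⟩
          _ = sizes k1 k2 k3 n p j := card_fiber _ j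
          _ ≤ 3 := hsz
      have hrest : (Finset.univ.filter fun v => P v = cc ∧ v.1 ≠ j).card ≤ 2 :=
        class_bound_M (sizes k1 k2 k3 n p) P cc j (hpl cc) hj
      have hsplitc := Finset.card_filter_add_card_filter_not
        (s := Finset.univ.filter (fun v : (Σ i, Fin (sizes k1 k2 k3 n p i)) => P v = cc))
        (p := fun v => v.1 = j)
      have he1 : (Finset.univ.filter (fun v :
            (Σ i, Fin (sizes k1 k2 k3 n p i)) => P v = cc)).filter (fun v => v.1 = j)
          = Finset.univ.filter (fun v => P v = cc ∧ v.1 = j) := by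
        ext v
        simp only [Finset.mem_filter, Finset.mem_univ, true_and, and_assoc]
      have he2 : (Finset.univ.filter (fun v :
            (Σ i, Fin (sizes k1 k2 k3 n p i)) => P v = cc)).filter (fun v => ¬ v.1 = j)
          = Finset.univ.filter (fun v => P v = cc ∧ v.1 ≠ j) := by
        ext v
        simp only [Finset.mem_filter, Finset.mem_univ, true_and, and_assoc, Ne]
      rw [he1, he2] at hsplitc
      have h3j : 3 ≤ (Finset.univ.filter fun v :
          (Σ i, Fin (sizes k1 k2 k3 n p i)) => P v = cc ∧ v.1 = j).card := hj
      have hchle' : (Finset.univ.filter fun v :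
          (Σ i, Fin (sizes k1 k2 k3 n p i)) => P v = cc ∧ v.1 = j).card ≤ 3 := hchle
      omega
    · push_neg at hex
      apply class_bound_six (sizes k1 k2 k3 n p) P cc (hpl cc)
      intro j
      have h2j : (Finset.univ.filter fun v :
          (Σ i, Fin (sizes k1 k2 k3 n p i)) => P v = cc ∧ v.1 = j).card < 3 := hex j
      omega
  -- sum the class bounds
  have hsum_le : S.card ≤ 2 * KB.card + 6 * (k - KB.card) := by
    rw [hfiber]
    rw [← Finset.sum_sdiff (Finset.subset_univ KB)]
    have h1 : ∑ cc ∈ Finset.univ \ KB, (S.filter fun v => P v = cc).card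
        ≤ (Finset.univ \ KB).card * 6 := Finset.sum_le_card_nsmul _ _ 6 hclassNKB
    have h2 : ∑ cc ∈ KB, (S.filter fun v => P v = cc).card ≤ KB.card * 2 :=
      Finset.sum_le_card_nsmul _ _ 2 hclassKB
    have h3 : (Finset.univ \ KB).card = k - KB.card := by
      rw [Finset.card_sdiff_of_subset (Finset.subset_univ _), Finset.card_univ, Fintype.card_fin]
    rw [h3] at h1
    omega
  -- sum of smallest big parts
  have hmain : ∑ i ∈ Finset.range (n - k), p i + 4 * (U.card - (n - k)) ≤ ∑ i ∈ U, p i.1 := by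
    have himg : ∑ i ∈ U, p i.1 = ∑ i ∈ U.image Fin.val, p i := by
      rw [Finset.sum_image]
      intro x _ y _ h
      exact Fin.val_injective h
    have hcardimg : (U.image Fin.val).card = U.card :=
      Finset.card_image_of_injective _ Fin.val_injective
    have hmem : ∀ i ∈ U.image Fin.val, i < n := by
      intro i hi
      obtain ⟨x, _, hx⟩ := Finset.mem_image.mp hi
      rw [← hx]
      exact x.2
    have := sum_smallest_le p hp4 hmono (U.image Fin.val) hmem (n - k) (by omega)
    rw [himg]
    omega
  omega
end Lower

section Upper
variable (k1 k2 k3 n : ℕ) (p : ℕ → ℕ)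

/-- the value of the big index, or 0 -/
def bigval : Fin k1 ⊕ Fin k2 ⊕ Fin k3 ⊕ Fin n → ℕ :=
  fun jj => match jj with
  | .inr (.inr (.inr i)) => i.val
  | _ => 0

lemma upper_bound (hp4 : ∀ i, i < n → 4 ≤ p i)
    (j : ℕ) (hjn : j ≤ n)
    (hsum : k1 + 2 * k2 + 3 * k3 + ∑ i ∈ Finset.range j, p i ≤ 2 * (n - j)) :
    ∃ P : (Σ i, Fin (sizes k1 k2 k3 n p i)) → Fin (n - j),
      ∀ cc, IsPlanar ((Gmulti k1 k2 k3 n p).induce {v | P v = cc}) := by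
  classical
  rcases Nat.eq_zero_or_pos (n - j) with hm | hm
  · -- n = j, so everything is zero and the graph is empty
    have hj : j = n := by omega
    have hz : k1 = 0 ∧ k2 = 0 ∧ k3 = 0 ∧ n = 0 := by
      rcases Nat.eq_zero_or_pos n with h0 | h0
      · exact ⟨by omega, by omega, by omega, h0⟩
      · exfalso
        have h4 : 4 ≤ p 0 := hp4 0 h0
        rw [hj] at hsum
        have : p 0 ≤ ∑ i ∈ Finset.range n, p i := by
          apply Finset.single_le_sum (f := p) (fun i _ => Nat.zero_le _)
          exact Finset.mem_range.mpr h0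
        omega
    have hfalse : ∀ v : (Σ i, Fin (sizes k1 k2 k3 n p i)), False := by
      rintro ⟨(a | b | c | i), x⟩
      · exact absurd a.2 (by omega)
      · exact absurd b.2 (by omega)
      · exact absurd c.2 (by omega)
      · exact absurd i.2 (by omega)
    exact ⟨fun v => (hfalse v).elim, fun cc => absurd cc.2 (by omega)⟩
  · -- main case
    set m := n - j with hmdef
    set QL : (Fin k1 ⊕ Fin k2 ⊕ Fin k3 ⊕ Fin n) → Prop :=
      fun jj => ∀ i : Fin n, jj = bigI k1 k2 k3 n i → i.val < j with hQL
    -- cardinality of the leftover set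
    have hcard : (Finset.univ.filter
        (fun v : (Σ i, Fin (sizes k1 k2 k3 n p i)) => QL v.1)).card
        = k1 + 2 * k2 + 3 * k3 + ∑ i ∈ Finset.range j, p i := by
      have hcbf := card_base_filter (sizes k1 k2 k3 n p) QL
      rw [hcbf, Finset.sum_filter]
      rw [Fintype.sum_sum_type, Fintype.sum_sum_type, Fintype.sum_sum_type]
      have e1 : ∀ a : Fin k1, (if QL (Sum.inl a) then sizes k1 k2 k3 n p (Sum.inl a) else 0) = 1 := by
        intro a
        rw [if_pos]
        · rfl
        · intro i hi; exact absurd hi (by simp [bigI])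
      have e2 : ∀ a : Fin k2, (if QL (Sum.inr (Sum.inl a)) then
          sizes k1 k2 k3 n p (Sum.inr (Sum.inl a)) else 0) = 2 := by
        intro a
        rw [if_pos]
        · rfl
        · intro i hi; exact absurd hi (by simp [bigI])
      have e3 : ∀ a : Fin k3, (if QL (Sum.inr (Sum.inr (Sum.inl a))) then
          sizes k1 k2 k3 n p (Sum.inr (Sum.inr (Sum.inl a))) else 0) = 3 := by
        intro a
        rw [if_pos]
        · rfl
        · intro i hi; exact absurd hi (by simp [bigI])
      have e4 : ∀ i : Fin n, (if QL (Sum.inr (Sum.inr (Sum.inr i))) then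
          sizes k1 k2 k3 n p (Sum.inr (Sum.inr (Sum.inr i))) else 0)
          = if i.val < j then p i.1 else 0 := by
        intro i
        by_cases hij : i.val < j
        · rw [if_pos, if_pos hij]
          · rfl
          · intro i' hi'
            have : i' = i := bigI_inj k1 k2 k3 n hi'.symm
            rw [this]; exact hij
        · rw [if_neg, if_neg hij]
          intro hQi
          exact hij (hQi i rfl)
      rw [Finset.sum_congr rfl (fun a _ => e1 a), Finset.sum_congr rfl (fun a _ => e2 a),
        Finset.sum_congr rfl (fun a _ => e3 a), Finset.sum_congr rfl (fun i _ => e4 i)]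
      rw [Finset.sum_const, Finset.sum_const, Finset.sum_const, Finset.card_univ,
        Finset.card_univ, Finset.card_univ, Fintype.card_fin, Fintype.card_fin, Fintype.card_fin]
      have : ∑ i : Fin n, (if i.val < j then p i.1 else 0) = ∑ i ∈ Finset.range j, p i := by
        rw [Fin.sum_univ_eq_sum_range (fun i => if i < j then p i else 0) n]
        rw [← Finset.sum_filter]
        congr 1
        ext i
        simp only [Finset.mem_filter, Finset.mem_range]
        omega
      rw [this]
      simp [Nat.smul_one_eq_cast]
      ring
    -- the embedding
    have hcard2 : Fintype.card {v : (Σ i, Fin (sizes k1 k2 k3 n p i)) // QL v.1} ≤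
        Fintype.card (Fin (2 * m)) := by
      rw [Fintype.card_subtype, Fintype.card_fin, hcard]
      omega
    obtain ⟨φ⟩ := Function.Embedding.nonempty_of_card_le hcard2
    -- the partition
    set P : (Σ i, Fin (sizes k1 k2 k3 n p i)) → Fin m := fun v =>
      if h : QL v.1 then ⟨(φ ⟨v, h⟩).val / 2, by have := (φ ⟨v, h⟩).2; omega⟩
      else ⟨bigval k1 k2 k3 n v.1 - j, by
        have h' : ∃ i : Fin n, v.1 = bigI k1 k2 k3 n i ∧ ¬ i.val < j := by
          by_contra hno
          push_neg at hno
          exact h (fun i hi => hno i hi)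
        obtain ⟨i, hi, hij⟩ := h'
        rw [not_lt] at hij
        have : bigval k1 k2 k3 n v.1 = i.val := by rw [hi]; rfl
        have hin := i.2
        omega⟩ with hP
    refine ⟨P, fun cc => ?_⟩
    have hjcc : j + cc.val < n := by
      have := cc.2
      omega
    apply planar_of_almost_independent _
      {x : {v | P v = cc} | (x : (Σ i, Fin (sizes k1 k2 k3 n p i))).1
        = bigI k1 k2 k3 n ⟨j + cc.val, hjcc⟩}
    · intro a ha b hb hadj
      exact hadj (ha.trans hb.symm)
    · intro u v w hu hv hw
      have key : ∀ x : ({v | P v = cc} : Set (Σ i, Fin (sizes k1 k2 k3 n p i))),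
          x ∉ {x : ({v | P v = cc} : Set (Σ i, Fin (sizes k1 k2 k3 n p i))) |
            (x : (Σ i, Fin (sizes k1 k2 k3 n p i))).1 = bigI k1 k2 k3 n ⟨j + cc.val, hjcc⟩} →
          ∃ h : QL (x : (Σ i, Fin (sizes k1 k2 k3 n p i))).1,
            (φ ⟨(x : (Σ i, Fin (sizes k1 k2 k3 n p i))), h⟩).val = 2 * cc.val ∨
            (φ ⟨(x : (Σ i, Fin (sizes k1 k2 k3 n p i))), h⟩).val = 2 * cc.val + 1 := by
        intro x hxA
        have hx : P (x : (Σ i, Fin (sizes k1 k2 k3 n p i))) = cc := x.2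
        by_cases hq : QL (x : (Σ i, Fin (sizes k1 k2 k3 n p i))).1
        · refine ⟨hq, ?_⟩
          have hx' : (if h : QL (x : (Σ i, Fin (sizes k1 k2 k3 n p i))).1
              then (⟨(φ ⟨(x : (Σ i, Fin (sizes k1 k2 k3 n p i))), h⟩).val / 2, by
                have := (φ ⟨(x : (Σ i, Fin (sizes k1 k2 k3 n p i))), h⟩).2; omega⟩ : Fin m)
              else ⟨bigval k1 k2 k3 n (x : (Σ i, Fin (sizes k1 k2 k3 n p i))).1 - j, by
                have h' : ∃ i : Fin n, (x : (Σ i, Fin (sizes k1 k2 k3 n p i))).1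
                    = bigI k1 k2 k3 n i ∧ ¬ i.val < j := by
                  by_contra hno
                  push_neg at hno
                  exact h (fun i hi => hno i hi)
                obtain ⟨i, hi, hij⟩ := h'
                rw [not_lt] at hij
                have : bigval k1 k2 k3 n (x : (Σ i, Fin (sizes k1 k2 k3 n p i))).1
                    = i.val := by rw [hi]; rfl
                have hin := i.2
                omega⟩) = cc := (congrFun hP _).symm.trans hx
          rw [dif_pos hq] at hx'
          have hval := congrArg Fin.val hx' 
          simp only at hval
          have hlt := (φ ⟨(x : (Σ i, Fin (sizes k1 k2 k3 n p i))), hq⟩).2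
          omega
        · exfalso
          apply hxA
          have h' : ∃ i : Fin n,
              (x : (Σ i, Fin (sizes k1 k2 k3 n p i))).1 = bigI k1 k2 k3 n i ∧ ¬ i.val < j := by
            by_contra hno
            push_neg at hno
            exact hq (fun i hi => hno i hi)
          obtain ⟨i, hi, hij⟩ := h'
          rw [not_lt] at hij
          have hx' : (if h : QL (x : (Σ i, Fin (sizes k1 k2 k3 n p i))).1
              then (⟨(φ ⟨(x : (Σ i, Fin (sizes k1 k2 k3 n p i))), h⟩).val / 2, by
                have := (φ ⟨(x : (Σ i, Fin (sizes k1 k2 k3 n p i))), h⟩).2; omega⟩ : Fin m)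
              else ⟨bigval k1 k2 k3 n (x : (Σ i, Fin (sizes k1 k2 k3 n p i))).1 - j, by
                have h' : ∃ i : Fin n, (x : (Σ i, Fin (sizes k1 k2 k3 n p i))).1
                    = bigI k1 k2 k3 n i ∧ ¬ i.val < j := by
                  by_contra hno
                  push_neg at hno
                  exact h (fun i hi => hno i hi)
                obtain ⟨i, hi, hij⟩ := h'
                rw [not_lt] at hij
                have : bigval k1 k2 k3 n (x : (Σ i, Fin (sizes k1 k2 k3 n p i))).1
                    = i.val := by rw [hi]; rfl
                have hin := i.2
                omega⟩) = cc := (congrFun hP _).symm.trans hx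
          rw [dif_neg hq] at hx'
          have hval := congrArg Fin.val hx' 
          simp only at hval
          have hbv : bigval k1 k2 k3 n (x : (Σ i, Fin (sizes k1 k2 k3 n p i))).1 = i.val := by
            rw [hi]; rfl
          have hieq : i = ⟨j + cc.val, hjcc⟩ := by
            apply Fin.ext
            simp only
            omega
          show (x : (Σ i, Fin (sizes k1 k2 k3 n p i))).1 = bigI k1 k2 k3 n ⟨j + cc.val, hjcc⟩
          rw [hi, hieq]
      obtain ⟨hqu, hu2⟩ := key u hu
      obtain ⟨hqv, hv2⟩ := key v hv
      obtain ⟨hqw, hw2⟩ := key w hw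
      have pigeon : (φ ⟨(u : (Σ i, Fin (sizes k1 k2 k3 n p i))), hqu⟩).val =
            (φ ⟨(v : (Σ i, Fin (sizes k1 k2 k3 n p i))), hqv⟩).val ∨
          (φ ⟨(u : (Σ i, Fin (sizes k1 k2 k3 n p i))), hqu⟩).val =
            (φ ⟨(w : (Σ i, Fin (sizes k1 k2 k3 n p i))), hqw⟩).val ∨
          (φ ⟨(v : (Σ i, Fin (sizes k1 k2 k3 n p i))), hqv⟩).val =
            (φ ⟨(w : (Σ i, Fin (sizes k1 k2 k3 n p i))), hqw⟩).val := by
        omega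
      rcases pigeon with hpe | hpe | hpe
      · left
        have := φ.injective (Fin.val_injective hpe)
        exact Subtype.ext (congrArg (fun z : {v : (Σ i, Fin (sizes k1 k2 k3 n p i)) // QL v.1} => z.val) this)
      · right; left
        have := φ.injective (Fin.val_injective hpe)
        exact Subtype.ext (congrArg (fun z : {v : (Σ i, Fin (sizes k1 k2 k3 n p i)) // QL v.1} => z.val) this)
      · right; right
        have := φ.injective (Fin.val_injective hpe)
        exact Subtype.ext (congrArg (fun z : {v : (Σ i, Fin (sizes k1 k2 k3 n p i)) // QL v.1} => z.val) this)
end Upper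


/-- Theorem 1.1(a): for `G = K_{1^{k1},2^{k2},3^{k3},p_1,…,p_n}` with `4 ≤ p_1 ≤ ⋯ ≤ p_n`
and `p_0 = k1 + 2k2 + 3k3 ≤ 2n`, the point-thickness is
`n - max{ j ≤ n | p_0 + p_1 + ⋯ + p_j ≤ 2(n-j) }`. -/
theorem stmt7 (k1 k2 k3 n : ℕ) (p : ℕ → ℕ)
    (hp4 : ∀ i, i < n → 4 ≤ p i)
    (hmono : ∀ i j, i ≤ j → j < n → p i ≤ p j)
    (hp0 : k1 + 2 * k2 + 3 * k3 ≤ 2 * n) :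
    pointThickness (Gmulti k1 k2 k3 n p) =
      n - sSup {j | j ≤ n ∧
        k1 + 2 * k2 + 3 * k3 + ∑ i ∈ Finset.range j, p i ≤ 2 * (n - j)} := by
  classical
  set Jset : Set ℕ := {j | j ≤ n ∧
    k1 + 2 * k2 + 3 * k3 + ∑ i ∈ Finset.range j, p i ≤ 2 * (n - j)} with hJset
  have hJne : Jset.Nonempty := ⟨0, by
    constructor
    · exact Nat.zero_le n
    · simpa using hp0⟩
  have hJbdd : BddAbove Jset := ⟨n, fun j hj => hj.1⟩
  set js : ℕ := sSup Jset with hjs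
  have hmem : js ∈ Jset := Nat.sSup_mem hJne hJbdd
  have hub : ∀ j ∈ Jset, j ≤ js := fun j hj => le_csSup hJbdd hj
  have hjn : js ≤ n := hmem.1
  have hjsum : k1 + 2 * k2 + 3 * k3 + ∑ i ∈ Finset.range js, p i ≤ 2 * (n - js) := hmem.2
  rw [pointThickness]
  apply le_antisymm
  · -- upper bound
    apply Nat.sInf_le
    obtain ⟨P, hP⟩ := upper_bound k1 k2 k3 n p hp4 js hjn hjsum
    exact ⟨P, hP⟩
  · -- lower bound
    apply le_csInf
    · obtain ⟨P, hP⟩ := upper_bound k1 k2 k3 n p hp4 js hjn hjsum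
      exact ⟨n - js, P, hP⟩
    · rintro k ⟨P, hP⟩
      rcases le_or_gt n k with hnk | hnk
      · omega
      · have hkn : k ≤ n := le_of_lt hnk
        have hlb := lower_bound k1 k2 k3 n p hp4 hmono hp0 k hkn P hP
        have hmemk : (n - k) ∈ Jset := by
          constructor
          · omega
          · have : n - (n - k) = k := by omega
            rw [this]
            exact hlb
        have := hub _ hmemk
        omega
end
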